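/- Let A be a subalgebra of a finite-dimensional k-algebra B with J_A = J_B, and let N_i, N_j be indecomposable B-modules that are not simple. If the restrictions of N_i and N_j to A are isomorphic as A-modules, then N_i and N_j are isomorphic as B-modules. -/

import Mathlib

/-!
As `J := J_B = J_A` lies in `A`, an `A`-isomorphism `f : N₁ → N₂` commutes with `J`, so its
defect `f (b • n) - b • f n` lies in the socle `{x | J • x = 0}` of `N₂`. The pairs `(y, n)`
with `y - f n` in the socle form a `B`-module extending `N₁` by the socle; modulo `J` times it,
it is semisimple, and a retraction onto the socle there corrects `f` by a socle-valued map to a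
`B`-linear `g`. For `N₂` indecomposable and not simple the socle lies in `J N₂` (a submodule
meeting `J N₂` trivially is a direct summand), so `g` is onto by Nakayama. Correcting `f⁻¹` as
well gives surjections both ways between noetherian modules, hence `g` is bijective.
-/

noncomputable section

/-- The Jacobson radical of a ring, as a set. -/
def jacobsonSet (R : Type) [Ring R] : Set R := ((⊥ : Ideal R).jacobson : Set R)

section Restriction

variable (k B : Type) [Field k] [Ring B] [Algebra k B] (S : Subalgebra k B)

/-- Restriction of a `B`-module structure to the subalgebra `S ⊆ B`. -/
def restModule (N : Type) [AddCommGroup N] [Module B N] : Module ↥S N :=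
  Module.compHom N (S.val.toRingHom : ↥S →+* B)

variable (X : Type) [AddCommGroup X] [Module ↥S X]

/-- `X⁻ = Hom_A(B, X)` for an `A = S`-module `X`, where `B` is regarded as an
`A`-module by restriction; it is a left `B`-module via `(b • φ) x = φ (x * b)`. -/
def HomMinus : Type := B →ₗ[↥S] X

instance : AddCommGroup (HomMinus k B S X) :=
  inferInstanceAs (AddCommGroup (B →ₗ[↥S] X))

/-- The underlying `S`-linear map of an element of `X⁻`. -/
def HomMinus.toLin (φ : HomMinus k B S X) : B →ₗ[↥S] X := φ

instance : Module B (HomMinus k B S X) where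
  smul b φ := (HomMinus.toLin k B S X φ).comp (LinearMap.mulRight ↥S b)
  one_smul φ := LinearMap.ext fun x => by
    show HomMinus.toLin k B S X φ (x * 1) = HomMinus.toLin k B S X φ x
    rw [mul_one]
  mul_smul a b φ := LinearMap.ext fun x => by
    show HomMinus.toLin k B S X φ (x * (a * b)) = HomMinus.toLin k B S X φ ((x * a) * b)
    rw [mul_assoc]
  smul_zero a := LinearMap.ext fun _ => rfl
  smul_add a φ ψ := LinearMap.ext fun _ => rfl
  add_smul a b φ := LinearMap.ext fun x => by
    show HomMinus.toLin k B S X φ (x * (a + b)) =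
      HomMinus.toLin k B S X φ (x * a) + HomMinus.toLin k B S X φ (x * b)
    rw [mul_add, map_add]
  zero_smul φ := LinearMap.ext fun x => by
    show HomMinus.toLin k B S X φ (x * 0) = 0
    rw [mul_zero, map_zero]

lemma apply_coe_eq_smul_apply_one (φ : B →ₗ[↥S] X) (a : ↥S) :
    φ (a : B) = a • φ 1 := by
  have h : a • (1 : B) = (a : B) := by
    show (a : B) * 1 = (a : B)
    exact mul_one _
  rw [← h, map_smul]

/-- The evaluation map `ε_X : X⁻ → X`, `φ ↦ φ 1`, an `A = S`-module homomorphism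
(where `X⁻` is an `A`-module by restriction of its `B`-module structure). -/
def epsLin :
    letI := restModule k B S (HomMinus k B S X)
    HomMinus k B S X →ₗ[↥S] X :=
  letI := restModule k B S (HomMinus k B S X)
  { toFun := fun φ => HomMinus.toLin k B S X φ 1
    map_add' := fun _ _ => rfl
    map_smul' := by
      intro a φ
      show HomMinus.toLin k B S X φ ((1 : B) * (a : B)) =
        a • HomMinus.toLin k B S X φ 1
      rw [one_mul]
      exact apply_coe_eq_smul_apply_one k B S X (HomMinus.toLin k B S X φ) a }

variable (Y : Type) [AddCommGroup Y] [Module B Y]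

/-- The map `Hom_B(Y, X⁻) → Hom_A(Y, X)` sending `f` to the composite of `f`
followed by `ε_X`. -/
def transferMap (f : Y →ₗ[B] HomMinus k B S X) :
    letI := restModule k B S Y
    Y →ₗ[↥S] X :=
  letI := restModule k B S Y
  { toFun := fun y => HomMinus.toLin k B S X (f y) 1
    map_add' := fun y z => by
      show HomMinus.toLin k B S X (f (y + z)) 1 = _
      rw [map_add]
      rfl
    map_smul' := by
      intro a y
      show HomMinus.toLin k B S X (f ((a : B) • y)) 1 =
        a • HomMinus.toLin k B S X (f y) 1
      rw [map_smul]
      show HomMinus.toLin k B S X (f y) ((1 : B) * (a : B)) =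
        a • HomMinus.toLin k B S X (f y) 1
      rw [one_mul]
      exact apply_coe_eq_smul_apply_one k B S X (HomMinus.toLin k B S X (f y)) a }

end Restriction

end

/-- A module is indecomposable if it is nonzero and admits no nontrivial direct sum
decomposition. -/
def IsIndecomposableModule (A : Type) [Ring A] (M : Type) [AddCommGroup M] [Module A M] :
    Prop :=
  Nontrivial M ∧ ∀ N₁ N₂ : Submodule A M, IsCompl N₁ N₂ → N₁ = ⊥ ∨ N₂ = ⊥

open Submodule

namespace Submodule

variable {B M : Type*} [Ring B] [AddCommGroup M] [Module B M]

def torsionByIdeal (I : Ideal B) [I.IsTwoSided] : Submodule B M where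
  carrier := {x | ∀ j ∈ I, j • x = 0}
  add_mem' hx hy j hj := by rw [smul_add, hx j hj, hy j hj, add_zero]
  zero_mem' j _ := smul_zero j
  smul_mem' c x hx j hj := by rw [smul_smul]; exact hx _ (I.mul_mem_right c hj)

theorem isTorsionBySet_torsionByIdeal (I : Ideal B) [I.IsTwoSided] :
    Module.IsTorsionBySet B (torsionByIdeal I : Submodule B M) I :=
  fun x j => Subtype.ext (x.2 j j.2)

theorem eq_top_of_sup_jacobson_smul_top_eq_top [IsCoatomic (Submodule B M)] {N : Submodule B M}
    (h : N ⊔ Ring.jacobson B • ⊤ = ⊤) : N = ⊤ := by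
  refine (eq_top_or_exists_le_coatom N).resolve_right fun ⟨P, hP, hNP⟩ => hP.1 ?_
  rw [eq_top_iff, ← h]
  exact sup_le hNP ((Ring.jacobson_smul_top_le B M).trans (sInf_le hP))

end Submodule

section Semiprimary

variable {B : Type*} [Ring B] [IsSemiprimaryRing B]

theorem Module.IsTorsionBySet.isSemisimpleModule_of_jacobson {M : Type*} [AddCommGroup M]
    [Module B M] (h : Module.IsTorsionBySet B M (Ring.jacobson B)) : IsSemisimpleModule B M :=
  letI := h.module
  h.isSemisimpleModule_iff.mp inferInstance

theorem isSemisimpleModule_quotient_jacobson_smul_top (M : Type*) [AddCommGroup M]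
    [Module B M] :
    IsSemisimpleModule B (M ⧸ Ring.jacobson B • (⊤ : Submodule B M)) :=
  (Module.isTorsionBySet_quotient_ideal_smul M _).isSemisimpleModule_of_jacobson

theorem exists_isCompl_of_disjoint_jacobson_smul_top {M : Type*} [AddCommGroup M] [Module B M]
    {S : Submodule B M} (h : Disjoint S (Ring.jacobson B • ⊤)) : ∃ C, IsCompl S C := by
  have := isSemisimpleModule_quotient_jacobson_smul_top (B := B) M
  set π := (Ring.jacobson B • (⊤ : Submodule B M)).mkQ
  obtain ⟨C, hC⟩ := exists_isCompl (S.map π)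
  refine ⟨C.comap π, ?_, ?_⟩
  · refine disjoint_def.2 fun x hxS hxC => h.le_bot ⟨hxS, ?_⟩
    exact (Quotient.mk_eq_zero _).1 (disjoint_def.1 hC.disjoint _ (mem_map_of_mem hxS) hxC)
  · refine codisjoint_iff.2 (eq_top_iff.2 fun x _ => ?_)
    have hx : π x ∈ S.map π ⊔ C := hC.sup_eq_top ▸ mem_top
    obtain ⟨_, ⟨s, hs, rfl⟩, c, hc, hsc⟩ := mem_sup.1 hx
    have hxs : x - s ∈ C.comap π := by
      rw [mem_comap, map_sub, ← hsc, add_sub_cancel_left]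
      exact hc
    simpa using add_mem_sup hs hxs

end Semiprimary

namespace IsIndecomposableModule

variable {B M : Type} [Ring B] [AddCommGroup M] [Module B M]

theorem isSimpleModule [IsSemisimpleModule B M] (h : IsIndecomposableModule B M) :
    IsSimpleModule B M := by
  have := h.1
  refine { eq_bot_or_eq_top := fun S => ?_ }
  obtain ⟨C, hC⟩ := exists_isCompl S
  exact (h.2 S C hC).imp_right fun hC0 => by simpa [hC0] using hC.sup_eq_top

variable [IsSemiprimaryRing B]

theorem eq_bot_of_disjoint_jacobson_smul_top (h : IsIndecomposableModule B M)
    (hns : ¬IsSimpleModule B M) {S : Submodule B M}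
    (hS : Disjoint S (Ring.jacobson B • ⊤)) : S = ⊥ := by
  obtain ⟨C, hC⟩ := exists_isCompl_of_disjoint_jacobson_smul_top hS
  refine (h.2 S C hC).resolve_right fun hC0 => hns ?_
  have hStop : S = ⊤ := by simpa [hC0] using hC.sup_eq_top
  have hJ : Ring.jacobson B • (⊤ : Submodule B M) = ⊥ := by simpa [hStop] using hS
  have : IsSemisimpleModule B M := Module.IsTorsionBySet.isSemisimpleModule_of_jacobson
    fun x j => (mem_bot B).1 (hJ ▸ smul_mem_smul j.2 mem_top)
  exact h.isSimpleModule

theorem torsionByIdeal_jacobson_le (h : IsIndecomposableModule B M)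
    (hns : ¬IsSimpleModule B M) :
    torsionByIdeal (Ring.jacobson B) ≤ Ring.jacobson B • (⊤ : Submodule B M) := by
  set soc : Submodule B M := torsionByIdeal (Ring.jacobson B)
  have := (isTorsionBySet_torsionByIdeal (M := M) (Ring.jacobson B)).isSemisimpleModule_of_jacobson
  obtain ⟨T, hT⟩ := exists_isCompl ((Ring.jacobson B • ⊤ : Submodule B M).comap soc.subtype)
  have hdisj : Disjoint (T.map soc.subtype) (Ring.jacobson B • ⊤) := by
    rw [disjoint_iff, map_inf_eq_map_inf_comap, inf_comm, hT.inf_eq_bot, Submodule.map_bot]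
  have hT0 : T = ⊥ := map_injective_of_injective soc.injective_subtype <| by
    rw [Submodule.map_bot]
    exact h.eq_bot_of_disjoint_jacobson_smul_top hns hdisj
  rw [← comap_subtype_eq_top]
  simpa [hT0] using hT.sup_eq_top

end IsIndecomposableModule

namespace AddMonoidHom

variable {B N₁ N₂ : Type*} [Ring B] [AddCommGroup N₁] [Module B N₁] [AddCommGroup N₂]
  [Module B N₂] (φ : N₁ →+ N₂) (D : Submodule B N₂)
  (hφ : ∀ (b : B) (n : N₁), φ (b • n) - b • φ n ∈ D)

def graphMod : Submodule B (N₂ × N₁) where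
  carrier := {p | p.1 - φ p.2 ∈ D}
  add_mem' hp hq := by simpa [add_sub_add_comm] using add_mem hp hq
  zero_mem' := by simp
  smul_mem' b p hp := by
    have : b • p.1 - φ (b • p.2) = b • (p.1 - φ p.2) - (φ (b • p.2) - b • φ p.2) := by
      rw [smul_sub]; abel
    simpa [this] using sub_mem (D.smul_mem b hp) (hφ b p.2)

def graphModInl : D →ₗ[B] graphMod φ D hφ :=
  (LinearMap.inl B N₂ N₁ ∘ₗ D.subtype).codRestrict _ fun q => by simp [graphMod]

@[simp]
theorem coe_graphModInl_apply (q : D) :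
    (graphModInl φ D hφ q : N₂ × N₁) = ((q : N₂), 0) :=
  rfl

theorem exists_linearMap_sub_mem_of_retraction (ρ : graphMod φ D hφ →ₗ[B] D)
    (hρ : ρ ∘ₗ graphModInl φ D hφ = LinearMap.id) :
    ∃ g : N₁ →ₗ[B] N₂, ∀ n, g n - φ n ∈ D := by
  let σ : N₁ →+ graphMod φ D hφ :=
    { toFun := fun n => ⟨(φ n, n), by simp [graphMod]⟩
      map_zero' := by ext <;> simp
      map_add' := fun _ _ => by ext <;> simp }
  have hσ : ∀ (b : B) n, σ (b • n) = b • σ n + graphModInl φ D hφ ⟨_, hφ b n⟩ := by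
    intro b n; ext <;> simp [σ]
  refine ⟨{ toFun := fun n => φ n - ρ (σ n), map_add' := ?_, map_smul' := ?_ }, fun n => ?_⟩
  · intro n n'; simp only [map_add, Submodule.coe_add]; abel
  · intro b n
    have hδ : ρ (graphModInl φ D hφ ⟨_, hφ b n⟩) = ⟨_, hφ b n⟩ :=
      LinearMap.congr_fun hρ _
    simp only [hσ, map_add, map_smul, hδ, RingHom.id_apply, smul_sub, Submodule.coe_add,
      Submodule.coe_smul]
    abel
  · simp

theorem exists_retraction_graphModInl [IsSemiprimaryRing B]
    (hD : D ≤ torsionByIdeal (Ring.jacobson B))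
    (hφJ : ∀ j ∈ Ring.jacobson B, ∀ n, φ (j • n) = j • φ n) :
    ∃ ρ : graphMod φ D hφ →ₗ[B] D, ρ ∘ₗ graphModInl φ D hφ = LinearMap.id := by
  set R : Submodule B (graphMod φ D hφ) := Ring.jacobson B • ⊤
  have hR : ∀ t ∈ R, (t : N₂ × N₁).1 = φ (t : N₂ × N₁).2 := by
    intro t ht
    refine Submodule.smul_induction_on ht (fun j hj t _ => ?_) fun t t' ht ht' => ?_
    · have : j • ((t : N₂ × N₁).1 - φ (t : N₂ × N₁).2) = 0 := hD t.2 j hj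
      simpa [hφJ j hj, smul_sub, sub_eq_zero] using this
    · simp [ht, ht']
  have hinj : Function.Injective (R.mkQ ∘ₗ graphModInl φ D hφ) := by
    rw [← LinearMap.ker_eq_bot, eq_bot_iff]
    intro q hq
    simpa using hR _ ((Quotient.mk_eq_zero R).1 hq)
  have := isSemisimpleModule_quotient_jacobson_smul_top (B := B) (graphMod φ D hφ)
  obtain ⟨ρ, hρ⟩ := IsSemisimpleModule.extension_property _ hinj LinearMap.id
  exact ⟨ρ ∘ₗ R.mkQ, by rw [LinearMap.comp_assoc, hρ]⟩

theorem sub_smul_mem_torsionByIdeal {I : Ideal B} [I.IsTwoSided]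
    (hφI : ∀ j ∈ I, ∀ n, φ (j • n) = j • φ n) (b : B) (n : N₁) :
    φ (b • n) - b • φ n ∈ torsionByIdeal I := fun j hj => by
  rw [smul_sub, ← hφI j hj, smul_smul, smul_smul, ← hφI _ (I.mul_mem_right b hj), sub_self]

theorem exists_linearMap_sub_mem_torsionByIdeal_jacobson [IsSemiprimaryRing B]
    (hφJ : ∀ j ∈ Ring.jacobson B, ∀ n, φ (j • n) = j • φ n) :
    ∃ g : N₁ →ₗ[B] N₂, ∀ n, g n - φ n ∈ torsionByIdeal (Ring.jacobson B) :=
  have hφ := φ.sub_smul_mem_torsionByIdeal hφJ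
  have ⟨ρ, hρ⟩ := φ.exists_retraction_graphModInl _ hφ le_rfl hφJ
  φ.exists_linearMap_sub_mem_of_retraction _ hφ ρ hρ

end AddMonoidHom

theorem AddMonoidHom.exists_surjective_linearMap {B N₁ N₂ : Type} [Ring B] [IsSemiprimaryRing B]
    [AddCommGroup N₁] [Module B N₁] [AddCommGroup N₂] [Module B N₂]
    [IsCoatomic (Submodule B N₂)] (hind : IsIndecomposableModule B N₂)
    (hns : ¬IsSimpleModule B N₂) (φ : N₁ →+ N₂) (hsurj : Function.Surjective φ)
    (hφJ : ∀ j ∈ Ring.jacobson B, ∀ n, φ (j • n) = j • φ n) :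
    ∃ g : N₁ →ₗ[B] N₂, Function.Surjective g := by
  obtain ⟨g, hg⟩ := φ.exists_linearMap_sub_mem_torsionByIdeal_jacobson hφJ
  refine ⟨g, LinearMap.range_eq_top.1 <| eq_top_of_sup_jacobson_smul_top_eq_top <|
    eq_top_iff.2 fun y _ => ?_⟩
  obtain ⟨n, rfl⟩ := hsurj y
  rw [← sub_sub_cancel (g n) (φ n)]
  exact sub_mem (mem_sup_left (LinearMap.mem_range_self g n))
    (mem_sup_right (hind.torsionByIdeal_jacobson_le hns (hg n)))

/-- Let `A = S` be a subalgebra of the finite-dimensional `k`-algebra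
`B` with `J_A = J_B`, and let `N₁, N₂` be indecomposable non-simple `B`-modules.
If the restrictions of `N₁` and `N₂` to `A` are isomorphic as `A`-modules, then
`N₁ ≅ N₂` as `B`-modules. -/
theorem restriction_iso_implies_iso_of_indecomposable_nonsimple
    (k B : Type) [Field k] [Ring B] [Algebra k B] [FiniteDimensional k B]
    (S : Subalgebra k B)
    (hJ : Subtype.val '' jacobsonSet ↥S = jacobsonSet B)
    (N₁ : Type) [AddCommGroup N₁] [Module B N₁] [Module.Finite B N₁]
    (N₂ : Type) [AddCommGroup N₂] [Module B N₂] [Module.Finite B N₂]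
    (hind₁ : IsIndecomposableModule B N₁) (hind₂ : IsIndecomposableModule B N₂)
    (hns₁ : ¬ IsSimpleModule B N₁) (hns₂ : ¬ IsSimpleModule B N₂)
    (hres : letI := restModule k B S N₁
            letI := restModule k B S N₂
            Nonempty (N₁ ≃ₗ[↥S] N₂)) :
    Nonempty (N₁ ≃ₗ[B] N₂) := by
  let := restModule k B S N₁
  let := restModule k B S N₂
  obtain ⟨f⟩ := hres
  have hJS : ∀ j ∈ Ring.jacobson B, j ∈ S := fun j hj => by
    have hj' : j ∈ jacobsonSet B := by rwa [jacobsonSet, Ideal.jacobson_bot]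
    obtain ⟨a, -, rfl⟩ := hJ ▸ hj'
    exact a.2
  have : IsArtinianRing B := IsArtinianRing.of_finite k B
  obtain ⟨g, hg⟩ := (f : N₁ →+ N₂).exists_surjective_linearMap hind₂ hns₂ f.surjective
    fun j hj n => f.map_smul ⟨j, hJS j hj⟩ n
  obtain ⟨g', hg'⟩ := (f.symm : N₂ →+ N₁).exists_surjective_linearMap hind₁ hns₁
    f.symm.surjective fun j hj n => f.symm.map_smul ⟨j, hJS j hj⟩ n
  have hinj := IsNoetherian.injective_of_surjective_endomorphism (g' ∘ₗ g) (hg'.comp hg)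
  exact ⟨LinearEquiv.ofBijective g ⟨hinj.of_comp (f := g'), hg⟩⟩
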